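/- Let T₁, …, Tₙ be bounded linear operators on a complex Hilbert space H. Then for all vectors x, y ∈ H, |⟨(∑_{k=1}^n T_k) x, y⟩|² ≤ ⟨(∑_{k=1}^n |T_k|) x, x⟩ · ⟨(∑_{k=1}^n |T_k*|) y, y⟩, where |T| = (T*T)^{1/2}. -/

import Mathlib

/-!
For a single operator `T : E → F` consider the self-adjoint dilation `D = [[0, T†], [T, 0]]` on
`E ⊕ F`. Its square is `diag(T†T, TT†)`, so `|D| = diag(|T|, |T†|)`. Writing `D = D⁺ - D⁻` and
`|D| = D⁺ + D⁻` and applying the Cauchy–Schwarz inequality to the positive forms of `D⁺` and `D⁻`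
gives `|⟪D u, v⟫|² ≤ ⟪|D| u, u⟫ ⟪|D| v, v⟫`; at `u = (x, 0)`, `v = (0, y)` this is the mixed
Schwarz inequality `|⟪T x, y⟫|² ≤ ⟪|T| x, x⟫ ⟪|T†| y, y⟫`. Summing over `k` and applying the
Cauchy–Schwarz inequality in `ℝⁿ` gives the inequality for `∑ Tₖ`.
-/

set_option synthInstance.maxHeartbeats 1000000

open ContinuousLinearMap
open scoped InnerProductSpace

theorem norm_sum_sq_le_sum_mul_sum_of_norm_sq_le_mul {ι E : Type*} [SeminormedAddCommGroup E]
    (s : Finset ι) {c : ι → E} {f g : ι → ℝ} (hf : ∀ i ∈ s, 0 ≤ f i) (hg : ∀ i ∈ s, 0 ≤ g i)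
    (h : ∀ i ∈ s, ‖c i‖ ^ 2 ≤ f i * g i) :
    ‖∑ i ∈ s, c i‖ ^ 2 ≤ (∑ i ∈ s, f i) * ∑ i ∈ s, g i :=
  (pow_le_pow_left₀ (norm_nonneg _) (norm_sum_le s c) 2).trans
    (Finset.sum_sq_le_sum_mul_sum_of_sq_le_mul s hf hg h)

theorem norm_sub_sq_le_add_mul_add {E : Type*} [SeminormedAddCommGroup E] {p q : E}
    {a₁ a₂ b₁ b₂ : ℝ} (ha₁ : 0 ≤ a₁) (ha₂ : 0 ≤ a₂) (hb₁ : 0 ≤ b₁) (hb₂ : 0 ≤ b₂)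
    (hp : ‖p‖ ^ 2 ≤ a₁ * b₁) (hq : ‖q‖ ^ 2 ≤ a₂ * b₂) :
    ‖p - q‖ ^ 2 ≤ (a₁ + a₂) * (b₁ + b₂) := by
  simpa [Fin.sum_univ_two, sub_eq_add_neg] using
    norm_sum_sq_le_sum_mul_sum_of_norm_sq_le_mul Finset.univ (c := ![p, -q]) (f := ![a₁, a₂])
      (g := ![b₁, b₂]) (by simp [Fin.forall_fin_two, *]) (by simp [Fin.forall_fin_two, *])
      (by simp [Fin.forall_fin_two, hp, hq])

namespace ContinuousLinearMap

variable {E F : Type*} [NormedAddCommGroup E] [InnerProductSpace ℂ E]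
  [NormedAddCommGroup F] [InnerProductSpace ℂ F]

noncomputable def blockDiag (A : E →L[ℂ] E) (B : F →L[ℂ] F) :
    WithLp 2 (E × F) →L[ℂ] WithLp 2 (E × F) :=
  (WithLp.prodContinuousLinearEquiv 2 ℂ E F).symm.conjContinuousAlgEquiv (A.prodMap B)

@[simp] lemma blockDiag_apply (A : E →L[ℂ] E) (B : F →L[ℂ] F) (x : E) (y : F) :
    blockDiag A B (WithLp.toLp 2 (x, y)) = WithLp.toLp 2 (A x, B y) := rfl

lemma blockDiag_mul_blockDiag (A A' : E →L[ℂ] E) (B B' : F →L[ℂ] F) :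
    blockDiag A B * blockDiag A' B' = blockDiag (A * A') (B * B') := rfl

lemma IsPositive.blockDiag {A : E →L[ℂ] E} {B : F →L[ℂ] F} (hA : A.IsPositive)
    (hB : B.IsPositive) : (blockDiag A B).IsPositive := by
  refine ⟨fun z w => ?_, fun z => ?_⟩
  · obtain ⟨⟨x, y⟩⟩ := z
    obtain ⟨⟨x', y'⟩⟩ := w
    simpa [WithLp.prod_inner_apply] using
      congrArg₂ (· + ·) (hA.isSymmetric x x') (hB.isSymmetric y y')
  · obtain ⟨⟨x, y⟩⟩ := z
    simpa [reApplyInnerSelf, WithLp.prod_inner_apply] using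
      add_nonneg (hA.re_inner_nonneg_left x) (hB.re_inner_nonneg_left y)

variable [CompleteSpace E] [CompleteSpace F]

lemma isPositive_sqrt (A : E →L[ℂ] E) : (CFC.sqrt A).IsPositive :=
  (nonneg_iff_isPositive _).mp (CFC.sqrt_nonneg A)

lemma sqrt_blockDiag {A : E →L[ℂ] E} {B : F →L[ℂ] F} (hA : A.IsPositive) (hB : B.IsPositive) :
    CFC.sqrt (blockDiag A B) = blockDiag (CFC.sqrt A) (CFC.sqrt B) := by
  refine CFC.sqrt_unique ?_ ((nonneg_iff_isPositive _).mpr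
    ((isPositive_sqrt A).blockDiag (isPositive_sqrt B)))
  rw [blockDiag_mul_blockDiag, CFC.sqrt_mul_sqrt_self A ((nonneg_iff_isPositive A).mpr hA),
    CFC.sqrt_mul_sqrt_self B ((nonneg_iff_isPositive B).mpr hB)]

theorem IsPositive.norm_inner_sq_le {P : E →L[ℂ] E} (hP : P.IsPositive) (u v : E) :
    ‖⟪P u, v⟫_ℂ‖ ^ 2 ≤ (⟪P u, u⟫_ℂ).re * (⟪P v, v⟫_ℂ).re := by
  set S := CFC.sqrt P
  have inner_P (a b : E) : ⟪P a, b⟫_ℂ = ⟪S a, S b⟫_ℂ := by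
    rw [← CFC.sqrt_mul_sqrt_self P ((nonneg_iff_isPositive P).mpr hP)]
    exact (isPositive_sqrt P).isSymmetric (S a) b
  have re_inner_P (a : E) : (⟪P a, a⟫_ℂ).re = ‖S a‖ ^ 2 := by
    rw [inner_P]
    exact inner_self_eq_norm_sq (𝕜 := ℂ) _
  rw [inner_P, re_inner_P, re_inner_P, ← mul_pow]
  exact pow_le_pow_left₀ (norm_nonneg _) (norm_inner_le_norm _ _) 2

theorem _root_.IsSelfAdjoint.norm_inner_sq_le_abs {A : E →L[ℂ] E} (hA : IsSelfAdjoint A)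
    (u v : E) :
    ‖⟪A u, v⟫_ℂ‖ ^ 2 ≤ (⟪CFC.abs A u, u⟫_ℂ).re * (⟪CFC.abs A v, v⟫_ℂ).re := by
  have hpos := (nonneg_iff_isPositive _).mp (CFC.posPart_nonneg A)
  have hneg := (nonneg_iff_isPositive _).mp (CFC.negPart_nonneg A)
  rw [← CFC.posPart_add_negPart A]
  conv_lhs => rw [← CFC.posPart_sub_negPart A]
  simp only [sub_apply, add_apply, inner_sub_left, inner_add_left, Complex.add_re]
  exact norm_sub_sq_le_add_mul_add (hpos.re_inner_nonneg_left u) (hneg.re_inner_nonneg_left u)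
    (hpos.re_inner_nonneg_left v) (hneg.re_inner_nonneg_left v)
    (hpos.norm_inner_sq_le u v) (hneg.norm_inner_sq_le u v)

noncomputable def dilation (T : E →L[ℂ] F) : WithLp 2 (E × F) →L[ℂ] WithLp 2 (E × F) :=
  (WithLp.prodContinuousLinearEquiv 2 ℂ E F).symm.conjContinuousAlgEquiv
    ((adjoint T ∘L snd ℂ E F).prod (T ∘L fst ℂ E F))

@[simp] lemma dilation_apply (T : E →L[ℂ] F) (x : E) (y : F) :
    dilation T (WithLp.toLp 2 (x, y)) = WithLp.toLp 2 (adjoint T y, T x) := rfl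

lemma dilation_mul_self (T : E →L[ℂ] F) :
    dilation T * dilation T = blockDiag (adjoint T ∘L T) (T ∘L adjoint T) := rfl

lemma isSelfAdjoint_dilation (T : E →L[ℂ] F) : IsSelfAdjoint (dilation T) := by
  refine isSelfAdjoint_iff_isSymmetric.mpr fun z w => ?_
  obtain ⟨⟨x, y⟩⟩ := z
  obtain ⟨⟨x', y'⟩⟩ := w
  simp [WithLp.prod_inner_apply, adjoint_inner_left, adjoint_inner_right, add_comm]

lemma abs_dilation (T : E →L[ℂ] F) :
    CFC.abs (dilation T) = blockDiag (CFC.sqrt (adjoint T ∘L T)) (CFC.sqrt (T ∘L adjoint T)) := by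
  rw [CFC.abs, (isSelfAdjoint_dilation T).star_eq, dilation_mul_self,
    sqrt_blockDiag (isPositive_adjoint_comp_self T) (isPositive_self_comp_adjoint T)]

theorem norm_inner_sq_le_sqrt_adjoint_comp_self (T : E →L[ℂ] F) (x : E) (y : F) :
    ‖⟪T x, y⟫_ℂ‖ ^ 2 ≤
      (⟪CFC.sqrt (adjoint T ∘L T) x, x⟫_ℂ).re * (⟪CFC.sqrt (T ∘L adjoint T) y, y⟫_ℂ).re := by
  simpa [abs_dilation, WithLp.prod_inner_apply] using
    (isSelfAdjoint_dilation T).norm_inner_sq_le_abs (WithLp.toLp 2 (x, 0)) (WithLp.toLp 2 (0, y))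

end ContinuousLinearMap

theorem mixed_schwarz_sum {H : Type*} [NormedAddCommGroup H] [InnerProductSpace ℂ H]
    [CompleteSpace H] {n : ℕ} (T : Fin n → (H →L[ℂ] H)) (x y : H) :
    ‖⟪(∑ k, T k) x, y⟫_ℂ‖ ^ 2 ≤
      (⟪(∑ k, CFC.sqrt (adjoint (T k) * T k)) x, x⟫_ℂ).re *
        (⟪(∑ k, CFC.sqrt (T k * adjoint (T k))) y, y⟫_ℂ).re := by
  simp only [sum_apply, sum_inner, Complex.re_sum]
  exact norm_sum_sq_le_sum_mul_sum_of_norm_sq_le_mul _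
    (fun k _ => (isPositive_sqrt _).re_inner_nonneg_left x)
    (fun k _ => (isPositive_sqrt _).re_inner_nonneg_left y)
    (fun k _ => norm_inner_sq_le_sqrt_adjoint_comp_self (T k) x y)
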